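/- Let B ∈ ℝ^{n×m}, let P ∈ ℝ^{n×n} be symmetric, let e ∈ ℝ^n with s := Bᵀ P e ≠ 0, let M ∈ ℝ^{m×m} with ‖M‖ ≤ M̄ where 0 ≤ M̄ < 1, and let d ∈ ℝ^m with ‖d‖ ≤ d̄. If ρ ≥ (1 + M̄)·d̄/(1 − M̄), then eᵀ P (B + B M) d − ρ · eᵀ P (B + B M) (s/‖s‖) ≤ −‖s‖·(ρ(1 − M̄) − (1 + M̄) d̄) ≤ 0. -/

import Mathlib

open Matrix
open scoped Matrix.Norms.L2Operator

/-- Euclidean norm of a finitely-indexed real vector. -/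
noncomputable def enorm' {ι : Type*} [Fintype ι] (x : ι → ℝ) : ℝ :=
  ‖(EuclideanSpace.equiv ι ℝ).symm x‖

/-!
Since `P` is symmetric, `eᵀ P (B + B M) v = sᵀ (v + M v)`, so both terms only involve `s`.
By Cauchy–Schwarz and `‖M v‖ ≤ ‖M‖ ‖v‖`, the disturbance term is at most `(1 + M̄) ‖s‖ d̄`,
while the control term along `s / ‖s‖` is at least `(1 - M̄) ‖s‖`; the choice of `ρ` makes the
second dominate the first.
-/

section EuclideanNorm

variable {ι κ : Type*} [Fintype ι] [Fintype κ]

lemma enorm'_nonneg (x : ι → ℝ) : 0 ≤ enorm' x := norm_nonneg _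

open scoped RealInnerProductSpace in
lemma dotProduct_eq_inner (x y : ι → ℝ) :
    x ⬝ᵥ y = ⟪(EuclideanSpace.equiv ι ℝ).symm x, (EuclideanSpace.equiv ι ℝ).symm y⟫ := by
  rw [EuclideanSpace.inner_eq_star_dotProduct]
  simp [dotProduct, mul_comm]

lemma abs_dotProduct_le_enorm'_mul (x y : ι → ℝ) : |x ⬝ᵥ y| ≤ enorm' x * enorm' y := by
  rw [dotProduct_eq_inner]
  exact abs_real_inner_le_norm _ _

lemma dotProduct_self_eq_enorm'_sq (x : ι → ℝ) : x ⬝ᵥ x = enorm' x ^ 2 := by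
  rw [dotProduct_eq_inner, real_inner_self_eq_norm_sq]
  rfl

lemma enorm'_mulVec_le [DecidableEq ι] (A : Matrix κ ι ℝ) (x : ι → ℝ) :
    enorm' (A *ᵥ x) ≤ ‖A‖ * enorm' x :=
  A.l2_opNorm_mulVec _

lemma abs_dotProduct_mulVec_le [DecidableEq ι] (x : κ → ℝ) (A : Matrix κ ι ℝ) (y : ι → ℝ) :
    |x ⬝ᵥ (A *ᵥ y)| ≤ ‖A‖ * enorm' x * enorm' y :=
  calc |x ⬝ᵥ (A *ᵥ y)| ≤ enorm' x * enorm' (A *ᵥ y) := abs_dotProduct_le_enorm'_mul _ _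
    _ ≤ enorm' x * (‖A‖ * enorm' y) :=
        mul_le_mul_of_nonneg_left (enorm'_mulVec_le A y) (enorm'_nonneg x)
    _ = ‖A‖ * enorm' x * enorm' y := by ring

end EuclideanNorm

section PerturbedIdentity

variable {ι : Type*} [Fintype ι] [DecidableEq ι] (A : Matrix ι ι ℝ)

lemma dotProduct_add_mulVec_le (x y : ι → ℝ) :
    x ⬝ᵥ (y + A *ᵥ y) ≤ (1 + ‖A‖) * enorm' x * enorm' y := by
  have hxy := (abs_le.1 (abs_dotProduct_le_enorm'_mul x y)).2
  have hxAy := (abs_le.1 (abs_dotProduct_mulVec_le x A y)).2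
  rw [dotProduct_add]
  linarith

lemma le_dotProduct_add_mulVec_self (x : ι → ℝ) :
    (1 - ‖A‖) * enorm' x ^ 2 ≤ x ⬝ᵥ (x + A *ᵥ x) := by
  have hxAx := (abs_le.1 (abs_dotProduct_mulVec_le x A x)).1
  rw [dotProduct_add, dotProduct_self_eq_enorm'_sq]
  linarith

lemma le_dotProduct_add_mulVec_normalize (x : ι → ℝ) :
    (1 - ‖A‖) * enorm' x ≤
      x ⬝ᵥ ((enorm' x)⁻¹ • x + A *ᵥ ((enorm' x)⁻¹ • x)) := by
  rw [mulVec_smul, ← smul_add, dotProduct_smul, smul_eq_mul]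
  have hscale : (enorm' x)⁻¹ * enorm' x ^ 2 = enorm' x := by
    rcases eq_or_ne (enorm' x) 0 with h | h
    · simp [h]
    · field_simp
  calc (1 - ‖A‖) * enorm' x = (enorm' x)⁻¹ * ((1 - ‖A‖) * enorm' x ^ 2) := by
        rw [mul_left_comm, hscale]
    _ ≤ (enorm' x)⁻¹ * (x ⬝ᵥ (x + A *ᵥ x)) :=
        mul_le_mul_of_nonneg_left (le_dotProduct_add_mulVec_self A x)
          (inv_nonneg.2 (enorm'_nonneg x))

end PerturbedIdentity

lemma dotProduct_mulVec_mulVec_of_isSymm {ι κ : Type*} [Fintype ι] [Fintype κ]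
    {P : Matrix ι ι ℝ} (hP : P.IsSymm) (B : Matrix ι κ ℝ) (e : ι → ℝ) (v : κ → ℝ) :
    e ⬝ᵥ (P *ᵥ (B *ᵥ v)) = (Bᵀ *ᵥ (P *ᵥ e)) ⬝ᵥ v := by
  rw [dotProduct_mulVec, ← mulVec_transpose, hP.eq, dotProduct_mulVec, ← mulVec_transpose]

theorem robust_term_dominates_disturbance_general (n m : ℕ)
    (B : Matrix (Fin n) (Fin m) ℝ) (P : Matrix (Fin n) (Fin n) ℝ) (hP : P.IsSymm)
    (e : Fin n → ℝ) (M : Matrix (Fin m) (Fin m) ℝ)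
    (Mbar : ℝ) (hMbar1 : Mbar < 1) (hM : ‖M‖ ≤ Mbar)
    (d : Fin m → ℝ) (dbar : ℝ) (hd : enorm' d ≤ dbar)
    (s : Fin m → ℝ) (hs : s = Bᵀ *ᵥ (P *ᵥ e))
    (ρ : ℝ) (hρ : (1 + Mbar) * dbar / (1 - Mbar) ≤ ρ) :
    e ⬝ᵥ (P *ᵥ ((B + B * M) *ᵥ d))
        - ρ * (e ⬝ᵥ (P *ᵥ ((B + B * M) *ᵥ ((enorm' s)⁻¹ • s))))
      ≤ -(enorm' s) * (ρ * (1 - Mbar) - (1 + Mbar) * dbar) ∧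
    -(enorm' s) * (ρ * (1 - Mbar) - (1 + Mbar) * dbar) ≤ 0 := by
  have hform (v : Fin m → ℝ) : e ⬝ᵥ (P *ᵥ ((B + B * M) *ᵥ v)) = s ⬝ᵥ (v + M *ᵥ v) := by
    rw [add_mulVec, ← mulVec_mulVec, ← mulVec_add, dotProduct_mulVec_mulVec_of_isSymm hP, hs]
  have hMbar0 : 0 ≤ Mbar := (norm_nonneg M).trans hM
  have hnorm_s := enorm'_nonneg s
  have hdbar0 : 0 ≤ dbar := (enorm'_nonneg d).trans hd
  have hgain : (1 + Mbar) * dbar ≤ ρ * (1 - Mbar) := (div_le_iff₀ (by linarith)).1 hρ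
  have hρ0 : 0 ≤ ρ := (div_nonneg (by positivity) (by linarith)).trans hρ
  have hdist : s ⬝ᵥ (d + M *ᵥ d) ≤ (1 + Mbar) * enorm' s * dbar :=
    (dotProduct_add_mulVec_le M s d).trans (by gcongr; exact enorm'_nonneg d)
  have hctrl : (1 - Mbar) * enorm' s ≤
      s ⬝ᵥ ((enorm' s)⁻¹ • s + M *ᵥ ((enorm' s)⁻¹ • s)) :=
    le_trans (by gcongr) (le_dotProduct_add_mulVec_normalize M s)
  rw [hform, hform]
  constructor
  · nlinarith [mul_le_mul_of_nonneg_left hctrl hρ0]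
  · nlinarith [mul_nonneg hnorm_s (sub_nonneg.2 hgain)]

/-- Robust disturbance rejection: with s = Bᵀ P e ≠ 0, matched uncertainty ΔB = B M,
‖M‖ ≤ M̄ < 1, ‖d‖ ≤ d̄ and gain ρ ≥ (1 + M̄)d̄/(1 − M̄), one has
eᵀ P (B + BM) d − ρ eᵀ P (B + BM)(s/‖s‖) ≤ −‖s‖(ρ(1 − M̄) − (1 + M̄)d̄) ≤ 0. -/
theorem robust_term_dominates_disturbance (n m : ℕ)
    (B : Matrix (Fin n) (Fin m) ℝ) (P : Matrix (Fin n) (Fin n) ℝ) (hP : P.IsSymm)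
    (e : Fin n → ℝ) (M : Matrix (Fin m) (Fin m) ℝ)
    (Mbar : ℝ) (hMbar0 : 0 ≤ Mbar) (hMbar1 : Mbar < 1) (hM : ‖M‖ ≤ Mbar)
    (d : Fin m → ℝ) (dbar : ℝ) (hd : enorm' d ≤ dbar)
    (s : Fin m → ℝ) (hs : s = Bᵀ *ᵥ (P *ᵥ e)) (hs0 : s ≠ 0)
    (ρ : ℝ) (hρ : (1 + Mbar) * dbar / (1 - Mbar) ≤ ρ) :
    e ⬝ᵥ (P *ᵥ ((B + B * M) *ᵥ d))
        - ρ * (e ⬝ᵥ (P *ᵥ ((B + B * M) *ᵥ ((enorm' s)⁻¹ • s))))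
      ≤ -(enorm' s) * (ρ * (1 - Mbar) - (1 + Mbar) * dbar) ∧
    -(enorm' s) * (ρ * (1 - Mbar) - (1 + Mbar) * dbar) ≤ 0 :=
  robust_term_dominates_disturbance_general n m B P hP e M Mbar hMbar1 hM d dbar hd s hs ρ hρ
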